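/- arXiv:0908.0705 — 2 statements merged into one kernel-verified Lean document; each statement's English description precedes it below -/
import Mathlib

section
/- Let Γ be a locally finite connected graph with Floyd scaling function f. Any two distinct points p, q ∈ ∂_f Γ can be joined by a bi-infinite geodesic line γ : ℤ → Γ, i.e. an isometric embedding of ℤ into Γ with γ(n) → p and γ(−n) → q in the Floyd metric as n → ∞. -/
open Filter Topology

/-- The vertex set of a locally finite connected graph, presented via its
graph metric `d` (an integer-valued geodesic metric with finite balls). -/
structure GraphDist (V : Type) where
  d : V → V → ℕ
  d_self : ∀ x, d x x = 0
  eq_of_d : ∀ x y, d x y = 0 → x = y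
  d_symm : ∀ x y, d x y = d y x
  d_tri : ∀ x y z, d x z ≤ d x y + d y z
  locallyFinite : ∀ (x : V) (n : ℕ), {y | d x y ≤ n}.Finite
  geodesic : ∀ x y, 0 < d x y → ∃ z, d x z = 1 ∧ d z y + 1 = d x y

namespace GraphDist

variable {V : Type} (G : GraphDist V)

/-- `γ : Fin (n+1) → V` is an edge path (consecutive vertices at distance `≤ 1`). -/
def IsPath {n : ℕ} (γ : Fin (n + 1) → V) : Prop :=
  ∀ i : Fin n, G.d (γ i.castSucc) (γ i.succ) ≤ 1

/-- Floyd length of a path with respect to the scaling function `f` and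
basepoint `v`: the edge `{x,y}` has length `f (d v {x,y})`. -/
def floydLen (f : ℕ → ℝ) (v : V) {n : ℕ} (γ : Fin (n + 1) → V) : ℝ :=
  ∑ i : Fin n, f (min (G.d v (γ i.castSucc)) (G.d v (γ i.succ)))

/-- Floyd distance: infimal Floyd length of edge paths joining two vertices. -/
noncomputable def floydDist (f : ℕ → ℝ) (v : V) (a b : V) : ℝ :=
  sInf {L | ∃ (n : ℕ) (γ : Fin (n + 1) → V), G.IsPath γ ∧ γ 0 = a ∧
    γ (Fin.last n) = b ∧ L = G.floydLen f v γ}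

/-- A finite `c`-quasigeodesic path. -/
def IsQuasigeodesic (c : ℝ) {n : ℕ} (γ : Fin (n + 1) → V) : Prop :=
  G.IsPath γ ∧ ∀ s t : Fin (n + 1),
    (1 / c) * |(s : ℝ) - (t : ℝ)| - c ≤ (G.d (γ s) (γ t) : ℝ) ∧
    (G.d (γ s) (γ t) : ℝ) ≤ c * |(s : ℝ) - (t : ℝ)| + c

/-- A `c`-quasigeodesic ray. -/
def IsQuasigeodesicRay (c : ℝ) (γ : ℕ → V) : Prop :=
  (∀ n : ℕ, G.d (γ n) (γ (n + 1)) ≤ 1) ∧ ∀ s t : ℕ,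
    (1 / c) * |(s : ℝ) - (t : ℝ)| - c ≤ (G.d (γ s) (γ t) : ℝ) ∧
    (G.d (γ s) (γ t) : ℝ) ≤ c * |(s : ℝ) - (t : ℝ)| + c

/-- A finite `α`-distorted (`α`-geodesic) path. -/
def IsAlphaPath (α : ℕ → ℝ) {n : ℕ} (γ : Fin (n + 1) → V) : Prop :=
  G.IsPath γ ∧ ∀ s t : Fin (n + 1),
    (G.d (γ s) (γ t) : ℝ) ≤ α (Nat.dist s t) ∧
    (Nat.dist (s : ℕ) (t : ℕ) : ℝ) ≤ α (G.d (γ s) (γ t))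

/-- An `α`-geodesic ray. -/
def IsAlphaRay (α : ℕ → ℝ) (γ : ℕ → V) : Prop :=
  (∀ n : ℕ, G.d (γ n) (γ (n + 1)) ≤ 1) ∧ ∀ s t : ℕ,
    (G.d (γ s) (γ t) : ℝ) ≤ α (Nat.dist s t) ∧
    (Nat.dist s t : ℝ) ≤ α (G.d (γ s) (γ t))

end GraphDist

/-- `f` is a Floyd scaling function with ratio constant `K`. -/
def IsFloydFunction (f : ℕ → ℝ) (K : ℝ) : Prop :=
  (∀ n, 0 < f n) ∧ (∀ n, 1 ≤ f n / f (n + 1) ∧ f n / f (n + 1) ≤ K) ∧ Summable f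

/-- `α` is a distortion function: non-decreasing with `α n ≥ n`. -/
def IsDistortion (α : ℕ → ℝ) : Prop :=
  (∀ n, 0 < α n) ∧ Monotone α ∧ ∀ n : ℕ, (n : ℝ) ≤ α n

/-!
Since `p ≠ q`, the Floyd distances `δ(p n, q n)` stay above some `ε > 0` along a subsequence.
By Karlsson's lemma a geodesic segment that avoids the ball `B(v, 2R)` has Floyd length at most
`8 ∑_{u ≥ R} f u`, which is `< ε` for `R` large; so the geodesic segments from `p n` to `q n`
all meet the finite ball `B(v, 2R)`. Recentred there, they converge along an ultrafilter
(each vertex ranges over a finite ball) to a bi-infinite geodesic `γ`. The vertex `γ m` lies at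
depth `m` on segments running from `B(v, 2R)` to `p n`, so `δ(γ m, p n) ≤ ∑_{u ≥ m - 2R} f u`,
and the Cauchy property of `p` gives `γ m → p`; symmetrically `γ (-m) → q`.
-/

open Set

lemma sum_range_div_le_mul_tsum {g : ℕ → ℝ} (hg : ∀ n, 0 ≤ g n) (hs : Summable g) {k : ℕ}
    (hk : 0 < k) (M : ℕ) : ∑ t ∈ Finset.range M, g (t / k) ≤ k * ∑' u, g u := by
  have hblock : ∀ M, ∑ t ∈ Finset.range (k * M), g (t / k) = k * ∑ u ∈ Finset.range M, g u := by
    intro M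
    induction M with
    | zero => simp
    | succ M ih =>
      rw [Nat.mul_succ, Finset.sum_range_add, ih, Finset.sum_range_succ, mul_add]
      congr 1
      rw [Finset.sum_congr rfl fun j hj => by
        rw [Nat.mul_add_div hk, Nat.div_eq_of_lt (Finset.mem_range.mp hj), add_zero]]
      simp
  calc ∑ t ∈ Finset.range M, g (t / k) ≤ ∑ t ∈ Finset.range (k * M), g (t / k) :=
        Finset.sum_le_sum_of_subset_of_nonneg (Finset.range_mono (Nat.le_mul_of_pos_left M hk))
          fun _ _ _ => hg _
    _ = k * ∑ u ∈ Finset.range M, g u := hblock M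
    _ ≤ k * ∑' u, g u := by gcongr; exact hs.sum_le_tsum _ fun i _ => hg i

lemma exists_pos_frequently_le_of_not_tendsto_zero {ι : Type*} {l : Filter ι} {u : ι → ℝ}
    (hu : ∀ i, 0 ≤ u i) (h : ¬Tendsto u l (𝓝 0)) : ∃ ε > 0, ∃ᶠ i in l, ε ≤ u i := by
  obtain ⟨s, hs, hfreq⟩ := not_tendsto_iff_exists_frequently_notMem.1 h
  obtain ⟨ε, hε, hball⟩ := Metric.mem_nhds_iff.1 hs
  refine ⟨ε, hε, hfreq.mono fun i hi => not_lt.1 fun hlt => hi (hball ?_)⟩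
  rwa [Metric.mem_ball, Real.dist_eq, sub_zero, abs_of_nonneg (hu i)]

lemma Filter.Frequently.exists_ultrafilter {α : Type*} {l : Filter α} {p : α → Prop}
    (h : ∃ᶠ x in l, p x) : ∃ U : Ultrafilter α, ↑U ≤ l ∧ ∀ᶠ x in U, p x :=
  haveI := frequently_iff_neBot.1 h
  ⟨Ultrafilter.of _, (Ultrafilter.of_le _).trans inf_le_left,
    Ultrafilter.of_le _ (mem_inf_of_right (mem_principal_self _))⟩

namespace GraphDist

variable {V : Type} (G : GraphDist V)

def IsGeodesicOn (γ : ℤ → V) (s : Set ℤ) : Prop :=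
  ∀ a ∈ s, ∀ b ∈ s, G.d (γ a) (γ b) = (a - b).natAbs

/- `ℕ`-indexed counterparts of `IsPath` and `floydLen`, which are easier to concatenate and
reverse than `Fin`-indexed paths. -/
def IsNatPath (σ : ℕ → V) (N : ℕ) : Prop :=
  ∀ i < N, G.d (σ i) (σ (i + 1)) ≤ 1

def natFloydLen (f : ℕ → ℝ) (v : V) (σ : ℕ → V) (N : ℕ) : ℝ :=
  ∑ i ∈ Finset.range N, f (min (G.d v (σ i)) (G.d v (σ (i + 1))))

variable {G}

lemma IsGeodesicOn.mono {γ : ℤ → V} {s t : Set ℤ} (hγ : G.IsGeodesicOn γ s) (hts : t ⊆ s) :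
    G.IsGeodesicOn γ t :=
  fun a ha b hb => hγ a (hts ha) b (hts hb)

lemma IsGeodesicOn.comp {γ : ℤ → V} {s t : Set ℤ} (hγ : G.IsGeodesicOn γ s) {φ : ℤ → ℤ}
    (hφ : ∀ a b, (φ a - φ b).natAbs = (a - b).natAbs) (hts : MapsTo φ t s) :
    G.IsGeodesicOn (γ ∘ φ) t :=
  fun a ha b hb => (hγ _ (hts ha) _ (hts hb)).trans (hφ a b)

lemma IsGeodesicOn.d_le_d_add_natAbs {γ : ℤ → V} {s : Set ℤ} (hγ : G.IsGeodesicOn γ s) (h0 : 0 ∈ s)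
    {t : ℤ} (ht : t ∈ s) (v : V) : G.d v (γ t) ≤ G.d v (γ 0) + t.natAbs := by
  have := hγ 0 h0 t ht
  rw [zero_sub, Int.natAbs_neg] at this
  exact this ▸ G.d_tri _ _ _

lemma IsGeodesicOn.le_d_add_d {γ : ℤ → V} {s : Set ℤ} (hγ : G.IsGeodesicOn γ s) (h0 : 0 ∈ s)
    {t : ℕ} (ht : (t : ℤ) ∈ s) (v : V) : t ≤ G.d v (γ 0) + G.d v (γ t) := by
  have := hγ 0 h0 t ht
  rw [zero_sub, Int.natAbs_neg, Int.natAbs_natCast] at this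
  have := G.d_tri (γ 0) v (γ t)
  rw [G.d_symm (γ 0) v] at this
  omega

lemma IsGeodesicOn.isNatPath {γ : ℤ → V} {N : ℕ} (hγ : G.IsGeodesicOn γ (Icc 0 N)) :
    G.IsNatPath (fun i => γ i) N := by
  intro i hi
  rw [hγ _ ⟨by omega, by omega⟩ _ ⟨by omega, by omega⟩]
  omega

variable (G) in
lemma exists_isGeodesicOn_Icc (x y : V) :
    ∃ γ : ℤ → V, γ 0 = x ∧ γ (G.d x y) = y ∧ G.IsGeodesicOn γ (Icc 0 (G.d x y)) := by
  induction hn : G.d x y generalizing x with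
  | zero =>
    refine ⟨fun _ => x, rfl, G.eq_of_d x y hn, fun a ha b hb => ?_⟩
    simp only [Nat.cast_zero, mem_Icc] at ha hb
    simp [G.d_self]; omega
  | succ n ih =>
    obtain ⟨z, hxz, hzy⟩ := G.geodesic x y (by omega)
    obtain ⟨γ, hγ0, hγn, hγ⟩ := ih z (by omega)
    have hx : ∀ b ∈ Icc (0 : ℤ) n, G.d x (γ b) = (b + 1).natAbs := by
      rintro b ⟨hb0, hbn⟩
      have hzb := hγ 0 ⟨le_rfl, by omega⟩ b ⟨hb0, hbn⟩
      have hby := hγ b ⟨hb0, hbn⟩ n ⟨by omega, le_rfl⟩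
      rw [hγ0] at hzb
      rw [hγn] at hby
      have := G.d_tri x z (γ b)
      have := G.d_tri x (γ b) y
      omega
    refine ⟨fun s => if s ≤ 0 then x else γ (s - 1), by simp, ?_, fun a ha b hb => ?_⟩
    · dsimp only
      rw [if_neg (by omega)]
      simpa using hγn
    simp only [mem_Icc] at ha hb
    by_cases ha0 : a ≤ 0 <;> by_cases hb0 : b ≤ 0 <;> simp only [ha0, hb0, if_true, if_false]
    · simp [G.d_self]; omega
    · rw [hx _ ⟨by omega, by omega⟩]; omega
    · rw [G.d_symm, hx _ ⟨by omega, by omega⟩]; omega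
    · rw [hγ _ ⟨by omega, by omega⟩ _ ⟨by omega, by omega⟩]; omega

variable {f : ℕ → ℝ} {v : V}

lemma IsNatPath.natFloydLen_mem {σ : ℕ → V} {N : ℕ} (hσ : G.IsNatPath σ N) :
    G.natFloydLen f v σ N ∈ {L | ∃ (n : ℕ) (γ : Fin (n + 1) → V), G.IsPath γ ∧ γ 0 = σ 0 ∧
      γ (Fin.last n) = σ N ∧ L = G.floydLen f v γ} :=
  ⟨N, fun i => σ i, fun i => hσ i i.isLt, rfl, rfl, by
    simp [natFloydLen, floydLen,
      Fin.sum_univ_eq_sum_range (fun i => f (min (G.d v (σ i)) (G.d v (σ (i + 1)))))]⟩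

lemma floydDist_le_natFloydLen (hf0 : ∀ n, 0 ≤ f n) {σ : ℕ → V} {N : ℕ}
    (hσ : G.IsNatPath σ N) : G.floydDist f v (σ 0) (σ N) ≤ G.natFloydLen f v σ N := by
  refine csInf_le ⟨0, ?_⟩ hσ.natFloydLen_mem
  rintro _ ⟨n, γ, -, -, -, rfl⟩
  exact Finset.sum_nonneg fun i _ => hf0 _

lemma floydDist_nonneg (hf0 : ∀ n, 0 ≤ f n) (a b : V) : 0 ≤ G.floydDist f v a b := by
  refine Real.sInf_nonneg ?_
  rintro _ ⟨n, γ, -, -, -, rfl⟩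
  exact Finset.sum_nonneg fun i _ => hf0 _

lemma exists_natFloydLen_lt (a b : V) {ε : ℝ} (hε : 0 < ε) :
    ∃ (σ : ℕ → V) (N : ℕ), G.IsNatPath σ N ∧ σ 0 = a ∧ σ N = b ∧
      G.natFloydLen f v σ N < G.floydDist f v a b + ε := by
  obtain ⟨γ, hγ0, hγd, hγ⟩ := G.exists_isGeodesicOn_Icc a b
  have hne := hγ.isNatPath.natFloydLen_mem (f := f) (v := v)
  simp only [Nat.cast_zero, hγ0, hγd] at hne
  obtain ⟨_, ⟨n, γ, hγ, h0, hn, rfl⟩, hlt⟩ := Real.lt_sInf_add_pos ⟨_, hne⟩ hε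
  have hclamp : ∀ i : ℕ, min i n < n + 1 := fun i => by omega
  set σ : ℕ → V := fun i => γ ⟨min i n, hclamp i⟩
  have hcast : ∀ i : Fin n, σ i = γ i.castSucc :=
    fun i => congrArg γ (Fin.ext (by simp [i.isLt.le]))
  have hsucc : ∀ i : Fin n, σ (i + 1) = γ i.succ :=
    fun i => congrArg γ (Fin.ext (by simp [Nat.succ_le_of_lt i.isLt]))
  refine ⟨σ, n, fun i hi => ?_, by simpa [σ] using h0, by simpa [σ, Fin.last] using hn, ?_⟩
  · simpa only [hcast ⟨i, hi⟩, hsucc ⟨i, hi⟩] using hγ ⟨i, hi⟩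
  · refine lt_of_eq_of_lt ?_ hlt
    simp only [natFloydLen, floydLen, hcast, hsucc,
      ← Fin.sum_univ_eq_sum_range (fun i => f (min (G.d v (σ i)) (G.d v (σ (i + 1)))))]

lemma floydDist_triangle (hf0 : ∀ n, 0 ≤ f n) (a b c : V) :
    G.floydDist f v a c ≤ G.floydDist f v a b + G.floydDist f v b c := by
  refine le_of_forall_pos_le_add fun ε hε => ?_
  obtain ⟨σ, M, hσ, rfl, rfl, hσlt⟩ :=
    G.exists_natFloydLen_lt (f := f) (v := v) a b (half_pos hε)
  obtain ⟨τ, N, hτ, hτ0, rfl, hτlt⟩ :=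
    G.exists_natFloydLen_lt (f := f) (v := v) (σ M) c (half_pos hε)
  set ρ : ℕ → V := fun i => if i ≤ M then σ i else τ (i - M)
  have hρσ : ∀ i ≤ M, ρ i = σ i := fun i hi => if_pos hi
  have hρτ : ∀ i, ρ (M + i) = τ i := fun i => by
    rcases i with _ | i
    · simp [ρ, hτ0]
    · simp [ρ]
  have hρτ' : ∀ i, ρ (M + i + 1) = τ (i + 1) := fun i => hρτ (i + 1)
  have hρ : G.IsNatPath ρ (M + N) := by
    intro i hi
    rcases lt_or_ge i M with h | h
    · rw [hρσ i h.le, hρσ (i + 1) h]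
      exact hσ i h
    · obtain ⟨j, rfl⟩ := Nat.exists_eq_add_of_le h
      rw [hρτ, hρτ']
      exact hτ j (by omega)
  have hlen : G.natFloydLen f v ρ (M + N) = G.natFloydLen f v σ M + G.natFloydLen f v τ N := by
    simp only [natFloydLen, Finset.sum_range_add, hρτ, hρτ']
    congr 1
    refine Finset.sum_congr rfl fun i hi => ?_
    rw [Finset.mem_range] at hi
    rw [hρσ i hi.le, hρσ (i + 1) hi]
  have := floydDist_le_natFloydLen (v := v) hf0 hρ
  rw [hρσ 0 (Nat.zero_le M), hρτ N, hlen] at this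
  linarith

lemma floydDist_le_floydDist_swap (hf0 : ∀ n, 0 ≤ f n) (a b : V) :
    G.floydDist f v a b ≤ G.floydDist f v b a := by
  refine le_of_forall_pos_le_add fun ε hε => ?_
  obtain ⟨σ, N, hσ, rfl, rfl, hσlt⟩ := G.exists_natFloydLen_lt (f := f) (v := v) b a hε
  have hrev : G.IsNatPath (fun i => σ (N - i)) N := fun i hi => by
    show G.d (σ (N - i)) (σ (N - (i + 1))) ≤ 1
    rw [G.d_symm, show N - i = N - (i + 1) + 1 by omega]
    exact hσ _ (by omega)
  have hlen : G.natFloydLen f v (fun i => σ (N - i)) N = G.natFloydLen f v σ N := by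
    rw [natFloydLen, natFloydLen, ← Finset.sum_range_reflect]
    refine Finset.sum_congr rfl fun i hi => ?_
    rw [Finset.mem_range] at hi
    rw [min_comm, show N - (N - 1 - i) = i + 1 by omega, show N - (N - 1 - i + 1) = i by omega]
  have := floydDist_le_natFloydLen (v := v) hf0 hrev
  simp only [Nat.sub_zero, Nat.sub_self, hlen] at this
  linarith

lemma floydDist_comm (hf0 : ∀ n, 0 ≤ f n) (a b : V) :
    G.floydDist f v a b = G.floydDist f v b a :=
  le_antisymm (floydDist_le_floydDist_swap hf0 a b) (floydDist_le_floydDist_swap hf0 b a)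

lemma natFloydLen_le_mul_tsum (hf0 : ∀ n, 0 ≤ f n) (hfa : Antitone f) (hfs : Summable f)
    {k : ℕ} (hk : 0 < k) {σ : ℕ → V} {N c : ℕ} (hfar : ∀ i ≤ N, c + i / k ≤ G.d v (σ i)) :
    G.natFloydLen f v σ N ≤ k * ∑' u, f (u + c) :=
  calc G.natFloydLen f v σ N ≤ ∑ i ∈ Finset.range N, f (i / k + c) := by
        refine Finset.sum_le_sum fun i hi => hfa ?_
        rw [Finset.mem_range] at hi
        have := hfar i hi.le
        have := hfar (i + 1) hi
        have : i / k ≤ (i + 1) / k := Nat.div_le_div_right (by omega)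
        exact le_min (by omega) (by omega)
    _ ≤ k * ∑' u, f (u + c) := sum_range_div_le_mul_tsum (g := fun u => f (u + c))
        (fun _ => hf0 _) ((summable_nat_add_iff c).mpr hfs) hk N

lemma floydDist_le_mul_tsum_of_isGeodesicOn (hf0 : ∀ n, 0 ≤ f n) (hfa : Antitone f)
    (hfs : Summable f) {k : ℕ} (hk : 0 < k) {γ : ℤ → V} {N c : ℕ}
    (hγ : G.IsGeodesicOn γ (Icc 0 N)) (hfar : ∀ i : ℕ, i ≤ N → c + i / k ≤ G.d v (γ i)) :
    G.floydDist f v (γ 0) (γ N) ≤ k * ∑' u, f (u + c) :=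
  (floydDist_le_natFloydLen hf0 hγ.isNatPath).trans (natFloydLen_le_mul_tsum hf0 hfa hfs hk hfar)

lemma floydDist_le_tsum_of_isGeodesicOn (hf0 : ∀ n, 0 ≤ f n) (hfa : Antitone f)
    (hfs : Summable f) {γ : ℤ → V} {m b R : ℕ} (hγ : G.IsGeodesicOn γ (Icc 0 b)) (hRm : R ≤ m)
    (hmb : m ≤ b) (hR : G.d v (γ 0) ≤ R) :
    G.floydDist f v (γ m) (γ b) ≤ ∑' u, f (u + (m - R)) := by
  have hγ' : G.IsGeodesicOn (γ ∘ (m + ·)) (Icc 0 (b - m : ℕ)) :=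
    hγ.comp (fun _ _ => by congr 1; ring) fun x hx => by simp only [mem_Icc] at hx ⊢; omega
  have := floydDist_le_mul_tsum_of_isGeodesicOn (v := v) hf0 hfa hfs one_pos hγ' (c := m - R)
    fun i hi => by
      have := hγ.le_d_add_d ⟨le_rfl, by omega⟩ (t := m + i) ⟨by omega, by omega⟩ v
      simp only [Function.comp_apply, Nat.div_one, ← Nat.cast_add]
      omega
  simpa [Nat.cast_sub hmb] using this

lemma floydDist_le_of_isGeodesicOn_of_le (hf0 : ∀ n, 0 ≤ f n) (hfa : Antitone f)
    (hfs : Summable f) {γ : ℤ → V} {N R : ℕ} (hγ : G.IsGeodesicOn γ (Icc 0 N))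
    (hmin : ∀ s ∈ Icc (0 : ℤ) N, G.d v (γ 0) ≤ G.d v (γ s)) (hR : 2 * R < G.d v (γ 0)) :
    G.floydDist f v (γ 0) (γ N) ≤ 4 * ∑' u, f (u + R) := by
  refine floydDist_le_mul_tsum_of_isGeodesicOn (k := 4) hf0 hfa hfs (by norm_num) hγ
    fun i hi => ?_
  have hi' : (i : ℤ) ∈ Icc (0 : ℤ) N := ⟨by omega, by omega⟩
  have := hγ.le_d_add_d ⟨le_rfl, by omega⟩ hi' v
  have := hmin i hi'
  omega

/-- Karlsson's lemma. Split `γ` at its point closest to `v`: along each half, the vertex at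
distance `i` from that point is at distance at least `max (2R + 1, i / 2) ≥ R + i / 4` from `v`. -/
lemma floydDist_le_of_isGeodesicOn_of_lt (hf0 : ∀ n, 0 ≤ f n) (hfa : Antitone f)
    (hfs : Summable f) {γ : ℤ → V} {L R : ℕ} (hγ : G.IsGeodesicOn γ (Icc 0 L))
    (hfar : ∀ s ∈ Icc (0 : ℤ) L, 2 * R < G.d v (γ s)) :
    G.floydDist f v (γ 0) (γ L) ≤ 8 * ∑' u, f (u + R) := by
  obtain ⟨j, hj, hjmin⟩ :=
    Finset.exists_min_image (Finset.range (L + 1)) (fun j : ℕ => G.d v (γ j)) ⟨0, by simp⟩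
  replace hj : j ≤ L := by rw [Finset.mem_range] at hj; omega
  have hmin : ∀ s ∈ Icc (0 : ℤ) L, G.d v (γ j) ≤ G.d v (γ s) := fun s ⟨hs0, hsL⟩ => by
    lift s to ℕ using hs0
    exact hjmin s (Finset.mem_range.mpr (by omega))
  have hR : 2 * R < G.d v (γ j) := hfar j ⟨by omega, by omega⟩
  have hright : G.IsGeodesicOn (γ ∘ (j + ·)) (Icc 0 (L - j : ℕ)) :=
    hγ.comp (fun _ _ => by congr 1; ring) fun x hx => by simp only [mem_Icc] at hx ⊢; omega
  have hleft : G.IsGeodesicOn (γ ∘ (j - ·)) (Icc 0 j) :=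
    hγ.comp (fun _ _ => by omega) fun x hx => by simp only [mem_Icc] at hx ⊢; omega
  have h1 := floydDist_le_of_isGeodesicOn_of_le (v := v) hf0 hfa hfs hright
    (fun s hs => by simpa using hmin _ ⟨by simp at hs; omega, by simp at hs; omega⟩)
    (by simpa using hR)
  have h2 := floydDist_le_of_isGeodesicOn_of_le (v := v) hf0 hfa hfs hleft
    (fun s hs => by simpa using hmin _ ⟨by simp at hs; omega, by simp at hs; omega⟩)
    (by simpa using hR)
  simp only [Function.comp_apply, add_zero, sub_zero, sub_self, Nat.cast_sub hj,
    add_sub_cancel] at h1 h2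
  calc G.floydDist f v (γ 0) (γ L)
      ≤ G.floydDist f v (γ 0) (γ j) + G.floydDist f v (γ j) (γ L) :=
        floydDist_triangle hf0 _ _ _
    _ = G.floydDist f v (γ j) (γ 0) + G.floydDist f v (γ j) (γ L) := by
        rw [floydDist_comm hf0 (γ 0)]
    _ ≤ 8 * ∑' u, f (u + R) := by linarith

lemma exists_isGeodesicOn_near_of_lt_floydDist (hf0 : ∀ n, 0 ≤ f n) (hfa : Antitone f)
    (hfs : Summable f) {x y : V} {R : ℕ} (h : 8 * ∑' u, f (u + R) < G.floydDist f v x y) :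
    ∃ (γ : ℤ → V) (a b : ℕ), G.IsGeodesicOn γ (Icc (-a) b) ∧ G.d v (γ 0) ≤ 2 * R ∧
      γ b = x ∧ γ (-a) = y := by
  obtain ⟨σ, rfl, hσy, hσ⟩ := G.exists_isGeodesicOn_Icc x y
  obtain ⟨j, ⟨hj0, hjL⟩, hjR⟩ : ∃ j ∈ Icc (0 : ℤ) (G.d (σ 0) y), G.d v (σ j) ≤ 2 * R := by
    by_contra! hfar
    exact h.not_ge (hσy ▸ floydDist_le_of_isGeodesicOn_of_lt hf0 hfa hfs hσ hfar)
  lift j to ℕ using hj0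
  refine ⟨σ ∘ (j - ·), G.d (σ 0) y - j, j, hσ.comp (fun _ _ => by omega) fun x hx => ?_,
    by simpa using hjR, by simp, ?_⟩
  · simp only [mem_Icc] at hx ⊢
    omega
  · simp only [Function.comp_apply]
    exact (congrArg σ (by omega)).trans hσy

lemma exists_eventually_eq_of_ultrafilter {ι : Type*} (U : Ultrafilter ι) {x : ι → V} {r : ℕ}
    (hx : ∀ᶠ i in U, G.d v (x i) ≤ r) : ∃ y, ∀ᶠ i in U, x i = y := by
  obtain ⟨y, -, hy⟩ := Ultrafilter.eq_pure_of_finite_mem (G.locallyFinite v r)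
    (show {y | G.d v y ≤ r} ∈ U.map x from hx)
  have : {y} ∈ U.map x := hy ▸ Ultrafilter.mem_pure.2 rfl
  exact ⟨y, this⟩

lemma exists_isGeodesicOn_univ_of_ultrafilter {ι : Type*} (U : Ultrafilter ι) (g : ι → ℤ → V)
    (a b : ι → ℕ) (R : ℕ)
    (hg : ∀ᶠ i in U, G.IsGeodesicOn (g i) (Icc (-a i) (b i)) ∧ G.d v (g i 0) ≤ R)
    (ha : Tendsto (fun i => G.d v (g i (-a i))) U atTop)
    (hb : Tendsto (fun i => G.d v (g i (b i))) U atTop) :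
    ∃ γ : ℤ → V, G.IsGeodesicOn γ univ ∧ ∀ s, ∀ᶠ i in U, g i s = γ s := by
  have hwide : ∀ s : ℤ, ∀ᶠ i in U, G.IsGeodesicOn (g i) (Icc (-a i) (b i)) ∧
      G.d v (g i 0) ≤ R ∧ s ∈ Icc (-a i : ℤ) (b i) := by
    intro s
    filter_upwards [hg, ha.eventually_ge_atTop (R + s.natAbs),
      hb.eventually_ge_atTop (R + s.natAbs)] with i ⟨hgi, hR⟩ hai hbi
    have h0 : (0 : ℤ) ∈ Icc (-a i : ℤ) (b i) := ⟨by omega, by omega⟩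
    have := hgi.d_le_d_add_natAbs h0 (t := -a i) ⟨le_rfl, by omega⟩ v
    have := hgi.d_le_d_add_natAbs h0 (t := b i) ⟨by omega, le_rfl⟩ v
    simp only [Int.natAbs_neg, Int.natAbs_natCast] at *
    exact ⟨hgi, hR, by omega, by omega⟩
  have hval : ∀ s, ∃ y, ∀ᶠ i in U, g i s = y := fun s =>
    exists_eventually_eq_of_ultrafilter U <| (hwide s).mono fun i ⟨hgi, hR, hs⟩ =>
      (hgi.d_le_d_add_natAbs ⟨by omega, by omega⟩ hs v).trans (Nat.add_le_add_right hR _)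
  choose γ hγ using hval
  refine ⟨γ, fun s _ t _ => ?_, hγ⟩
  obtain ⟨i, hs, ht, ⟨hgi, -, hsi⟩, -, -, hti⟩ :=
    ((hγ s).and ((hγ t).and ((hwide s).and (hwide t)))).exists
  rw [← hs, ← ht]
  exact hgi s hsi t hti

lemma tendsto_floydDist_of_frequently_isGeodesicOn (hf0 : ∀ n, 0 ≤ f n) (hfa : Antitone f)
    (hfs : Summable f) {γ : ℤ → V} {p : ℕ → V} {R : ℕ}
    (hpCauchy : ∀ ε : ℝ, 0 < ε → ∃ N : ℕ, ∀ m : ℕ, N ≤ m → ∀ n : ℕ, N ≤ n →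
      G.floydDist f v (p m) (p n) < ε)
    (hpEsc : Tendsto (fun n => G.d v (p n)) atTop atTop)
    (hγ : ∀ m : ℕ, ∃ᶠ n in atTop, ∃ (g : ℤ → V) (b : ℕ),
      G.IsGeodesicOn g (Icc 0 b) ∧ G.d v (g 0) ≤ R ∧ g m = γ m ∧ g b = p n) :
    Tendsto (fun m : ℕ => G.floydDist f v (γ m) (p m)) atTop (𝓝 0) := by
  refine Metric.tendsto_atTop.2 fun ε hε => ?_
  obtain ⟨N, hN⟩ := hpCauchy (ε / 2) (half_pos hε)
  obtain ⟨M, hM⟩ :=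
    eventually_atTop.1 ((tendsto_sum_nat_add f).eventually_lt_const (half_pos hε))
  refine ⟨N + M + R, fun m hm => ?_⟩
  obtain ⟨n, ⟨g, b, hg, hgR, hgm, hgb⟩, hnN, hpn⟩ := ((hγ m).and_eventually
    ((eventually_ge_atTop N).and (hpEsc.eventually_ge_atTop (m + R)))).exists
  have hmb : m ≤ b := by
    have := hg.d_le_d_add_natAbs ⟨le_rfl, by omega⟩ (t := b) ⟨by omega, le_rfl⟩ v
    rw [hgb, Int.natAbs_natCast] at this
    omega
  have hfar : G.floydDist f v (γ m) (p n) ≤ ∑' u, f (u + (m - R)) :=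
    hgm ▸ hgb ▸ floydDist_le_tsum_of_isGeodesicOn hf0 hfa hfs hg (by omega) hmb hgR
  have := floydDist_triangle (G := G) (v := v) hf0 (γ m) (p n) (p m)
  have := hN n hnN m (by omega)
  have := hM (m - R) (by omega)
  rw [Real.dist_eq, sub_zero, abs_of_nonneg (floydDist_nonneg hf0 _ _)]
  linarith

end GraphDist

theorem stmt8_general {V : Type} (G : GraphDist V) (v : V)
    (f : ℕ → ℝ) (K : ℝ) (hf : IsFloydFunction f K)
    (p q : ℕ → V)
    (hpCauchy : ∀ ε : ℝ, 0 < ε → ∃ N : ℕ, ∀ m : ℕ, N ≤ m → ∀ n : ℕ, N ≤ n →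
      G.floydDist f v (p m) (p n) < ε)
    (hqCauchy : ∀ ε : ℝ, 0 < ε → ∃ N : ℕ, ∀ m : ℕ, N ≤ m → ∀ n : ℕ, N ≤ n →
      G.floydDist f v (q m) (q n) < ε)
    (hpEsc : Tendsto (fun n => G.d v (p n)) atTop atTop)
    (hqEsc : Tendsto (fun n => G.d v (q n)) atTop atTop)
    (hpq : ¬ Tendsto (fun n => G.floydDist f v (p n) (q n)) atTop (nhds 0)) :
    ∃ γ : ℤ → V, (∀ s t : ℤ, (G.d (γ s) (γ t) : ℤ) = |s - t|) ∧
      Tendsto (fun n : ℕ => G.floydDist f v (γ (n : ℤ)) (p n)) atTop (nhds 0) ∧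
      Tendsto (fun n : ℕ => G.floydDist f v (γ (-(n : ℤ))) (q n)) atTop (nhds 0) := by
  obtain ⟨hf0, hfK, hfs⟩ := hf
  have hfa : Antitone f :=
    antitone_nat_of_succ_le fun n => (one_le_div (hf0 (n + 1))).mp (hfK n).1
  replace hf0 : ∀ n, 0 ≤ f n := fun n => (hf0 n).le
  obtain ⟨ε, hε, hpqε⟩ := exists_pos_frequently_le_of_not_tendsto_zero
    (fun n => GraphDist.floydDist_nonneg hf0 _ _) hpq
  obtain ⟨R, hR⟩ := (((tendsto_sum_nat_add f).const_mul 8).eventually_lt_const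
    (by simpa using hε)).exists
  obtain ⟨U, hUtop, hU⟩ := hpqε.exists_ultrafilter
  have : Nonempty V := ⟨v⟩
  choose! g a b hg hgR hgb hga using fun n (hn : ε ≤ G.floydDist f v (p n) (q n)) =>
    GraphDist.exists_isGeodesicOn_near_of_lt_floydDist hf0 hfa hfs (hR.trans_le hn)
  obtain ⟨γ, hγ, hγg⟩ := GraphDist.exists_isGeodesicOn_univ_of_ultrafilter U g a b (2 * R)
    (hU.mono fun n hn => ⟨hg n hn, hgR n hn⟩)
    ((hqEsc.mono_left hUtop).congr' (hU.mono fun n hn => congrArg (G.d v) (hga n hn).symm))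
    ((hpEsc.mono_left hUtop).congr' (hU.mono fun n hn => congrArg (G.d v) (hgb n hn).symm))
  refine ⟨γ, fun s t => by rw [hγ s trivial t trivial, Int.natCast_natAbs], ?_, ?_⟩
  · refine GraphDist.tendsto_floydDist_of_frequently_isGeodesicOn hf0 hfa hfs hpCauchy hpEsc
      fun m => (((hγg m).and hU).frequently.filter_mono hUtop).mono fun n ⟨hgm, hn⟩ =>
        ⟨g n, b n, (hg n hn).mono (Icc_subset_Icc (by omega) le_rfl), hgR n hn, hgm, hgb n hn⟩
  · refine GraphDist.tendsto_floydDist_of_frequently_isGeodesicOn (γ := fun s => γ (-s))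
      hf0 hfa hfs hqCauchy hqEsc
      fun m => (((hγg (-m)).and hU).frequently.filter_mono hUtop).mono fun n ⟨hgm, hn⟩ =>
        ⟨fun s => g n (-s), a n,
          (hg n hn).comp (φ := Neg.neg) (fun _ _ => by omega) fun x hx => by
            simp only [mem_Icc] at hx ⊢; omega,
          by simpa using hgR n hn, hgm, by simpa using hga n hn⟩

/-- any two distinct points `p ≠ q` of the Floyd boundary
(represented by escaping Floyd-Cauchy sequences of vertices defining distinct
boundary points) are joined by a bi-infinite geodesic line `γ : ℤ → V`, with
`γ n → p` and `γ (-n) → q` in the Floyd metric. -/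
theorem stmt8 {V : Type} (G : GraphDist V) (v : V)
    (f : ℕ → ℝ) (K : ℝ) (hK : 0 < K) (hf : IsFloydFunction f K)
    (p q : ℕ → V)
    (hpCauchy : ∀ ε : ℝ, 0 < ε → ∃ N : ℕ, ∀ m : ℕ, N ≤ m → ∀ n : ℕ, N ≤ n →
      G.floydDist f v (p m) (p n) < ε)
    (hqCauchy : ∀ ε : ℝ, 0 < ε → ∃ N : ℕ, ∀ m : ℕ, N ≤ m → ∀ n : ℕ, N ≤ n →
      G.floydDist f v (q m) (q n) < ε)
    (hpEsc : Tendsto (fun n => G.d v (p n)) atTop atTop)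
    (hqEsc : Tendsto (fun n => G.d v (q n)) atTop atTop)
    (hpq : ¬ Tendsto (fun n => G.floydDist f v (p n) (q n)) atTop (nhds 0)) :
    ∃ γ : ℤ → V, (∀ s t : ℤ, (G.d (γ s) (γ t) : ℤ) = |s - t|) ∧
      Tendsto (fun n : ℕ => G.floydDist f v (γ (n : ℤ)) (p n)) atTop (nhds 0) ∧
      Tendsto (fun n : ℕ => G.floydDist f v (γ (-(n : ℤ))) (q n)) atTop (nhds 0) :=
  stmt8_general G v f K hf p q hpCauchy hqCauchy hpEsc hqEsc hpq
end

section
/- Let Γ₁, Γ₂ be locally finite connected graphs with Floyd scaling functions f₁, f₂, and let φ : Γ₁ → Γ₂ be a c-quasi-isometric map (for c ∈ ℕ). If there is D > 0 with f₂(n)/f₁(cn) < D for all n, then φ is Lipschitz with respect to the Floyd metrics: there exists ε > 0 such that δ_{f₂}(φ(x), φ(y)) ≤ (1/ε) · δ_{f₁}(x, y) for all vertices x, y of Γ₁. Consequently φ extends to a Lipschitz map between the Floyd completions. -/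
/-!
An edge `{a, b}` of `Γ₁` is sent to a pair at distance `≤ 2c` in `Γ₂`; join it by a geodesic.
By the quasi-isometry bounds every vertex `w` of that geodesic satisfies
`d(v₁, a) ≤ c · d(v₂, w) + A` for a constant `A`, so `f₂(d(v₂, w)) < D f₁(c · d(v₂, w))`
together with the bounded ratio `f₁(n) ≤ K₁ ^ A f₁(n + A)` bounds the Floyd length of the geodesic
by a constant times the Floyd length of the edge. Replacing every edge of a path of `Γ₁` by such a
geodesic gives the Lipschitz bound.
-/

open Filter Topology

namespace GraphDist

variable {V : Type} (G : GraphDist V)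

theorem isPath_cons {n : ℕ} (a : V) (γ : Fin (n + 1) → V) :
    G.IsPath (Fin.cons a γ : Fin (n + 2) → V) ↔ G.d a (γ 0) ≤ 1 ∧ G.IsPath γ := by
  simp only [IsPath, Fin.forall_fin_succ, ← Fin.succ_castSucc]
  rfl

theorem floydLen_cons (f : ℕ → ℝ) (v : V) {n : ℕ} (a : V) (γ : Fin (n + 1) → V) :
    G.floydLen f v (Fin.cons a γ : Fin (n + 2) → V) =
      f (min (G.d v a) (G.d v (γ 0))) + G.floydLen f v γ := by
  simp only [floydLen, Fin.sum_univ_succ, ← Fin.succ_castSucc]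
  rfl

theorem exists_isPath_of_d_eq (n : ℕ) :
    ∀ x y : V, G.d x y = n → ∃ γ : Fin (n + 1) → V,
      G.IsPath γ ∧ γ 0 = x ∧ γ (Fin.last n) = y ∧ ∀ i, G.d x (γ i) ≤ i := by
  induction n with
  | zero =>
    intro x y hxy
    refine ⟨fun _ => x, fun i => i.elim0, rfl, G.eq_of_d x y hxy, fun _ => ?_⟩
    simp [G.d_self]
  | succ n ih =>
    intro x y hxy
    obtain ⟨z, hxz, hzy⟩ := G.geodesic x y (by omega)
    obtain ⟨γ, hγ, h0, hlast, hdist⟩ := ih z y (by omega)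
    refine ⟨Fin.cons x γ, (G.isPath_cons x γ).2 ⟨h0 ▸ hxz.le, hγ⟩, rfl,
      by rw [← Fin.succ_last, Fin.cons_succ, hlast], Fin.cases (by simp [G.d_self]) fun i => ?_⟩
    rw [Fin.cons_succ, Fin.val_succ]
    have := G.d_tri x z (γ i)
    have := hdist i
    omega

theorem floydLen_nonneg {f : ℕ → ℝ} (hf : ∀ n, 0 ≤ f n) (v : V) {n : ℕ}
    (γ : Fin (n + 1) → V) : 0 ≤ G.floydLen f v γ :=
  Finset.sum_nonneg fun _ _ => hf _

theorem floydDist_le_floydLen {f : ℕ → ℝ} (hf : ∀ n, 0 ≤ f n) (v : V) {a b : V} {n : ℕ}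
    {γ : Fin (n + 1) → V} (hγ : G.IsPath γ) (h0 : γ 0 = a) (hlast : γ (Fin.last n) = b) :
    G.floydDist f v a b ≤ G.floydLen f v γ :=
  csInf_le ⟨0, by rintro _ ⟨n, γ, -, -, -, rfl⟩; exact G.floydLen_nonneg hf v γ⟩
    ⟨n, γ, hγ, h0, hlast, rfl⟩

theorem floydDist_set_nonempty (f : ℕ → ℝ) (v a b : V) :
    {L | ∃ (n : ℕ) (γ : Fin (n + 1) → V), G.IsPath γ ∧ γ 0 = a ∧
      γ (Fin.last n) = b ∧ L = G.floydLen f v γ}.Nonempty := by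
  obtain ⟨γ, hγ, h0, hlast, -⟩ := G.exists_isPath_of_d_eq _ a b rfl
  exact ⟨_, _, γ, hγ, h0, hlast, rfl⟩

theorem exists_isPath_append {f : ℕ → ℝ} {v : V} {n m : ℕ} {γ : Fin (n + 1) → V}
    {δ : Fin (m + 1) → V} (hγ : G.IsPath γ) (hδ : G.IsPath δ)
    (hγδ : γ (Fin.last n) = δ 0) :
    ∃ (k : ℕ) (η : Fin (k + 1) → V), G.IsPath η ∧ η 0 = γ 0 ∧
      η (Fin.last k) = δ (Fin.last m) ∧ G.floydLen f v η = G.floydLen f v γ + G.floydLen f v δ := by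
  induction n with
  | zero => exact ⟨m, δ, hδ, hγδ.symm, rfl, by simp [floydLen]⟩
  | succ n ih =>
    obtain ⟨a, γ, rfl⟩ : ∃ a γ', γ = Fin.cons a γ' :=
      ⟨_, _, (Fin.cons_self_tail γ).symm⟩
    obtain ⟨hstep, hγ⟩ := (G.isPath_cons a γ).1 hγ
    rw [← Fin.succ_last, Fin.cons_succ] at hγδ
    obtain ⟨k, η, hη, h0, hlast, hlen⟩ := ih hγ hγδ
    refine ⟨k + 1, Fin.cons a η, (G.isPath_cons a η).2 ⟨h0 ▸ hstep, hη⟩, rfl,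
      by rw [← Fin.succ_last, Fin.cons_succ, hlast], ?_⟩
    rw [floydLen_cons, floydLen_cons, hlen, h0, add_assoc]

theorem floydLen_le_mul {f : ℕ → ℝ} {v : V} {n : ℕ} {γ : Fin (n + 1) → V} {B : ℝ}
    (hB : ∀ i, f (G.d v (γ i)) ≤ B) : G.floydLen f v γ ≤ n * B := by
  calc G.floydLen f v γ ≤ ∑ _i : Fin n, B := Finset.sum_le_sum fun i _ => by
        rcases min_choice (G.d v (γ i.castSucc)) (G.d v (γ i.succ)) with h | h <;>
          rw [h] <;> apply hB
    _ = n * B := by simp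

section Map

variable {V₁ V₂ : Type} (G₁ : GraphDist V₁) (G₂ : GraphDist V₂)
  {v₁ : V₁} {v₂ : V₂} {f₁ f₂ : ℕ → ℝ} {C : ℝ} {g : V₁ → V₂}

theorem exists_isPath_map_floydLen_le
    (hedge : ∀ a b, G₁.d a b ≤ 1 →
      ∃ (k : ℕ) (η : Fin (k + 1) → V₂), G₂.IsPath η ∧ η 0 = g a ∧ η (Fin.last k) = g b ∧
      G₂.floydLen f₂ v₂ η ≤ C * f₁ (min (G₁.d v₁ a) (G₁.d v₁ b)))
    {n : ℕ} {γ : Fin (n + 1) → V₁} (hγ : G₁.IsPath γ) :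
    ∃ (k : ℕ) (η : Fin (k + 1) → V₂), G₂.IsPath η ∧ η 0 = g (γ 0) ∧
      η (Fin.last k) = g (γ (Fin.last n)) ∧
      G₂.floydLen f₂ v₂ η ≤ C * G₁.floydLen f₁ v₁ γ := by
  induction n with
  | zero => exact ⟨0, fun _ => g (γ 0), fun i => i.elim0, rfl, rfl, by simp [floydLen]⟩
  | succ n ih =>
    obtain ⟨a, γ, rfl⟩ : ∃ a γ', γ = Fin.cons a γ' :=
      ⟨_, _, (Fin.cons_self_tail γ).symm⟩
    obtain ⟨hstep, hγ⟩ := (G₁.isPath_cons a γ).1 hγ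
    obtain ⟨k, η, hη, hη0, hηlast, hηlen⟩ := hedge a (γ 0) hstep
    obtain ⟨l, θ, hθ, hθ0, hθlast, hθlen⟩ := ih hγ
    obtain ⟨m, ζ, hζ, hζ0, hζlast, hζlen⟩ :=
      G₂.exists_isPath_append (f := f₂) (v := v₂) hη hθ (hηlast.trans hθ0.symm)
    refine ⟨m, ζ, hζ, hζ0.trans hη0, ?_, ?_⟩
    · rw [hζlast, hθlast, ← Fin.succ_last, Fin.cons_succ]
    · rw [hζlen, G₁.floydLen_cons, mul_add]
      exact add_le_add hηlen hθlen

theorem floydDist_map_le (hf₂ : ∀ n, 0 ≤ f₂ n) (hC : 0 ≤ C)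
    (hedge : ∀ a b, G₁.d a b ≤ 1 →
      ∃ (k : ℕ) (η : Fin (k + 1) → V₂), G₂.IsPath η ∧ η 0 = g a ∧ η (Fin.last k) = g b ∧
      G₂.floydLen f₂ v₂ η ≤ C * f₁ (min (G₁.d v₁ a) (G₁.d v₁ b)))
    (x y : V₁) : G₂.floydDist f₂ v₂ (g x) (g y) ≤ C * G₁.floydDist f₁ v₁ x y := by
  rw [← smul_eq_mul, floydDist.eq_def G₁, ← Real.sInf_smul_of_nonneg hC]
  refine le_csInf ((G₁.floydDist_set_nonempty f₁ v₁ x y).smul_set) ?_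
  rintro _ ⟨_, ⟨n, γ, hγ, rfl, rfl, rfl⟩, rfl⟩
  obtain ⟨k, η, hη, h0, hlast, hlen⟩ := G₁.exists_isPath_map_floydLen_le G₂ hedge hγ
  exact (G₂.floydDist_le_floydLen hf₂ v₂ hη h0 hlast).trans hlen

end Map

end GraphDist

namespace IsFloydFunction

variable {f : ℕ → ℝ} {K : ℝ}

theorem one_le (hf : IsFloydFunction f K) : 1 ≤ K :=
  (hf.2.1 0).1.trans (hf.2.1 0).2

theorem antitone (hf : IsFloydFunction f K) : Antitone f :=
  antitone_nat_of_succ_le fun n => by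
    have := (hf.2.1 n).1
    rwa [le_div_iff₀ (hf.1 (n + 1)), one_mul] at this

theorem le_pow_mul_add (hf : IsFloydFunction f K) (n j : ℕ) : f n ≤ K ^ j * f (n + j) := by
  induction j with
  | zero => simp
  | succ j ih =>
    have hstep : f (n + j) ≤ K * f (n + j + 1) :=
      (div_le_iff₀ (hf.1 _)).1 (hf.2.1 (n + j)).2
    calc f n ≤ K ^ j * f (n + j) := ih
      _ ≤ K ^ j * (K * f (n + j + 1)) :=
        mul_le_mul_of_nonneg_left hstep (pow_nonneg (zero_le_one.trans hf.one_le) j)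
      _ = K ^ (j + 1) * f (n + (j + 1)) := by ring_nf

theorem le_pow_mul_of_le_add (hf : IsFloydFunction f K) {m n j : ℕ} (h : m ≤ n + j) :
    f n ≤ K ^ j * f m :=
  (hf.le_pow_mul_add n j).trans <|
    mul_le_mul_of_nonneg_left (hf.antitone h) (pow_nonneg (zero_le_one.trans hf.one_le) j)

end IsFloydFunction

theorem floyd_le_pow_mul_of_d_map_le {V₁ V₂ : Type} (G₁ : GraphDist V₁)
    (G₂ : GraphDist V₂) (v₁ : V₁) (v₂ : V₂) {f₁ f₂ : ℕ → ℝ} {K₁ : ℝ}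
    (hf₁ : IsFloydFunction f₁ K₁) {c : ℕ} (hc : 0 < c)
    {φ : V₁ → V₂} (hφ : ∀ x y, (1 / (c : ℝ)) * G₁.d x y - c ≤ G₂.d (φ x) (φ y))
    {D : ℝ} (hD : 0 ≤ D) (hcmp : ∀ n, f₂ n / f₁ (c * n) < D)
    {a : V₁} {w : V₂} {r : ℕ} (hw : G₂.d (φ a) w ≤ r) :
    f₂ (G₂.d v₂ w) ≤ D * K₁ ^ (c * (G₂.d v₂ (φ v₁) + r + c)) * f₁ (G₁.d v₁ a) := by
  have hqi : G₁.d v₁ a ≤ c * G₂.d (φ v₁) (φ a) + c * c := by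
    have h := hφ v₁ a
    rw [div_mul_eq_mul_div, one_mul, sub_le_iff_le_add, div_le_iff₀ (by positivity)] at h
    exact_mod_cast (by nlinarith : (G₁.d v₁ a : ℝ) ≤ c * G₂.d (φ v₁) (φ a) + c * c)
  have hbase : G₂.d (φ v₁) (φ a) ≤ G₂.d v₂ (φ v₁) + G₂.d v₂ w + r := by
    have := G₂.d_tri (φ v₁) v₂ (φ a)
    have := G₂.d_tri v₂ w (φ a)
    have := G₂.d_symm (φ v₁) v₂
    have := G₂.d_symm w (φ a)
    omega
  have hdist : G₁.d v₁ a ≤ c * G₂.d v₂ w + c * (G₂.d v₂ (φ v₁) + r + c) :=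
    calc G₁.d v₁ a ≤ c * G₂.d (φ v₁) (φ a) + c * c := hqi
      _ ≤ c * (G₂.d v₂ (φ v₁) + G₂.d v₂ w + r) + c * c := by gcongr
      _ = c * G₂.d v₂ w + c * (G₂.d v₂ (φ v₁) + r + c) := by ring
  calc f₂ (G₂.d v₂ w) ≤ D * f₁ (c * G₂.d v₂ w) :=
        ((div_lt_iff₀ (hf₁.1 _)).1 (hcmp _)).le
    _ ≤ D * (K₁ ^ (c * (G₂.d v₂ (φ v₁) + r + c)) * f₁ (G₁.d v₁ a)) :=
        mul_le_mul_of_nonneg_left (hf₁.le_pow_mul_of_le_add hdist) hD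
    _ = _ := (mul_assoc _ _ _).symm

theorem exists_isPath_map_floydLen_le_of_d_le_one {V₁ V₂ : Type} (G₁ : GraphDist V₁)
    (G₂ : GraphDist V₂) (v₁ : V₁) (v₂ : V₂) {f₁ f₂ : ℕ → ℝ} {K₁ : ℝ}
    (hf₁ : IsFloydFunction f₁ K₁) {c : ℕ} (hc : 0 < c) {φ : V₁ → V₂}
    (hφ : ∀ x y : V₁,
      (1 / (c : ℝ)) * (G₁.d x y : ℝ) - c ≤ (G₂.d (φ x) (φ y) : ℝ) ∧
      (G₂.d (φ x) (φ y) : ℝ) ≤ c * (G₁.d x y : ℝ) + c)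
    {D : ℝ} (hD : 0 ≤ D) (hcmp : ∀ n, f₂ n / f₁ (c * n) < D)
    {a b : V₁} (hab : G₁.d a b ≤ 1) :
    ∃ (k : ℕ) (η : Fin (k + 1) → V₂), G₂.IsPath η ∧ η 0 = φ a ∧ η (Fin.last k) = φ b ∧
      G₂.floydLen f₂ v₂ η ≤ 2 * c * (D * K₁ ^ (c * (G₂.d v₂ (φ v₁) + 2 * c + c))) *
        f₁ (min (G₁.d v₁ a) (G₁.d v₁ b)) := by
  set B := D * K₁ ^ (c * (G₂.d v₂ (φ v₁) + 2 * c + c))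
  have hB : 0 ≤ B := by have := hf₁.one_le; positivity
  obtain ⟨γ, hγ, h0, hlast, hγdist⟩ := G₂.exists_isPath_of_d_eq _ (φ a) (φ b) rfl
  have hab' : G₂.d (φ a) (φ b) ≤ 2 * c := by
    have h := (hφ a b).2
    have : (G₁.d a b : ℝ) ≤ 1 := by exact_mod_cast hab
    exact_mod_cast (by nlinarith : (G₂.d (φ a) (φ b) : ℝ) ≤ 2 * c)
  have hvertex (i : Fin (G₂.d (φ a) (φ b) + 1)) :
      f₂ (G₂.d v₂ (γ i)) ≤ B * f₁ (G₁.d v₁ a) :=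
    floyd_le_pow_mul_of_d_map_le G₁ G₂ v₁ v₂ hf₁ hc (fun x y => (hφ x y).1) hD hcmp
      ((hγdist i).trans (by omega))
  refine ⟨_, γ, hγ, h0, hlast, ?_⟩
  calc G₂.floydLen f₂ v₂ γ ≤ G₂.d (φ a) (φ b) * (B * f₁ (G₁.d v₁ a)) :=
        G₂.floydLen_le_mul hvertex
    _ ≤ 2 * c * (B * f₁ (min (G₁.d v₁ a) (G₁.d v₁ b))) := by
        have := hf₁.1 (G₁.d v₁ a)
        gcongr ?_ * (_ * ?_)
        · exact_mod_cast hab'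
        · exact hf₁.antitone (min_le_left _ _)
    _ = 2 * c * B * f₁ (min (G₁.d v₁ a) (G₁.d v₁ b)) := by ring

theorem stmt9_general {V₁ V₂ : Type} (G₁ : GraphDist V₁) (G₂ : GraphDist V₂)
    (v₁ : V₁) (v₂ : V₂)
    (f₁ f₂ : ℕ → ℝ) (K₁ K₂ : ℝ)
    (hf₁ : IsFloydFunction f₁ K₁) (hf₂ : IsFloydFunction f₂ K₂)
    (c : ℕ) (hc : 0 < c) (φ : V₁ → V₂)
    (hφ : ∀ x y : V₁,
      (1 / (c : ℝ)) * (G₁.d x y : ℝ) - c ≤ (G₂.d (φ x) (φ y) : ℝ) ∧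
      (G₂.d (φ x) (φ y) : ℝ) ≤ c * (G₁.d x y : ℝ) + c)
    (D : ℝ) (hD : 0 < D) (hcmp : ∀ n : ℕ, f₂ n / f₁ (c * n) < D) :
    ∃ ε : ℝ, 0 < ε ∧ ∀ x y : V₁,
      G₂.floydDist f₂ v₂ (φ x) (φ y) ≤ (1 / ε) * G₁.floydDist f₁ v₁ x y := by
  set C := 2 * c * (D * K₁ ^ (c * (G₂.d v₂ (φ v₁) + 2 * c + c)))
  have hC : 0 < C := by have := hf₁.one_le; positivity
  refine ⟨1 / C, by positivity, fun x y => ?_⟩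
  rw [one_div_one_div]
  exact G₁.floydDist_map_le G₂ (fun n => (hf₂.1 n).le) hC.le
    (fun _ _ => exists_isPath_map_floydLen_le_of_d_le_one G₁ G₂ v₁ v₂ hf₁ hc hφ hD.le hcmp) x y

/-- a `c`-quasi-isometric map `φ : Γ₁ → Γ₂` between locally finite
connected graphs with Floyd scaling functions satisfying `f₂(n)/f₁(cn) < D` is
Lipschitz for the Floyd metrics: there is `ε > 0` with
`δ_{f₂}(φ x, φ y) ≤ (1/ε) δ_{f₁}(x, y)`; consequently it extends to a Lipschitz
map between the Floyd completions. -/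
theorem stmt9 {V₁ V₂ : Type} (G₁ : GraphDist V₁) (G₂ : GraphDist V₂)
    (v₁ : V₁) (v₂ : V₂)
    (f₁ f₂ : ℕ → ℝ) (K₁ K₂ : ℝ) (hK₁ : 0 < K₁) (hK₂ : 0 < K₂)
    (hf₁ : IsFloydFunction f₁ K₁) (hf₂ : IsFloydFunction f₂ K₂)
    (c : ℕ) (hc : 0 < c) (φ : V₁ → V₂)
    (hφ : ∀ x y : V₁,
      (1 / (c : ℝ)) * (G₁.d x y : ℝ) - c ≤ (G₂.d (φ x) (φ y) : ℝ) ∧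
      (G₂.d (φ x) (φ y) : ℝ) ≤ c * (G₁.d x y : ℝ) + c)
    (D : ℝ) (hD : 0 < D) (hcmp : ∀ n : ℕ, f₂ n / f₁ (c * n) < D) :
    ∃ ε : ℝ, 0 < ε ∧ ∀ x y : V₁,
      G₂.floydDist f₂ v₂ (φ x) (φ y) ≤ (1 / ε) * G₁.floydDist f₁ v₁ x y :=
  stmt9_general G₁ G₂ v₁ v₂ f₁ f₂ K₁ K₂ hf₁ hf₂ c hc φ hφ D hD hcmp
end
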